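/- Let a ≥ 0 and m ≥ 1 be real numbers. Then the function g(x) = ( |x + a|^m + |x − a|^m )^{2/m} / x² is monotone nonincreasing on (0, ∞). -/

import Mathlib

open scoped Kronecker ComplexOrder
open Matrix

/-- Frobenius (Hilbert–Schmidt) norm ‖A‖₂ = (Tr A†A)^{1/2}. -/
noncomputable def frob {m n : Type*} [Fintype m] [Fintype n] (A : Matrix m n ℂ) : ℝ :=
  Real.sqrt ((Aᴴ * A).trace.re)

/-- ‖Φ‖_{2→2} = sup_{A ≠ 0} ‖Φ(A)‖₂ / ‖A‖₂. -/
noncomputable def norm22 {m m' : Type*} [Fintype m] [Fintype m']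
    (Φ : Matrix m m ℂ →ₗ[ℂ] Matrix m' m' ℂ) : ℝ :=
  sSup {r | ∃ A, A ≠ 0 ∧ r = frob (Φ A) / frob A}

/-- Choi matrix ∑_{j,k} E_{jk} ⊗ Φ(E_{jk}) of a linear map between matrix algebras. -/
noncomputable def choi {m m' : Type*} [Fintype m] [DecidableEq m] [Fintype m']
    (Φ : Matrix m m ℂ →ₗ[ℂ] Matrix m' m' ℂ) : Matrix (m × m') (m × m') ℂ :=
  ∑ j, ∑ k, (Matrix.single j k (1 : ℂ)) ⊗ₖ Φ (Matrix.single j k 1)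

/-- A linear map between matrix algebras is completely positive iff its Choi matrix is
positive semidefinite. -/
def IsCPMap {m m' : Type*} [Fintype m] [DecidableEq m] [Fintype m']
    (Φ : Matrix m m ℂ →ₗ[ℂ] Matrix m' m' ℂ) : Prop :=
  (choi Φ).PosSemidef

/-- Schatten p-norm ‖A‖_p = (Tr |A|^p)^{1/p}, computed through the singular values of A,
i.e. the square roots of the eigenvalues of A†A. -/
noncomputable def schatten {m n : Type*} [Fintype m] [Fintype n] [DecidableEq n]
    (p : ℝ) (A : Matrix m n ℂ) : ℝ :=
  (∑ i, Real.sqrt ((isHermitian_conjTranspose_mul_self A).eigenvalues i) ^ p) ^ (1 / p)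

/-- ν₂(Φ) = sup { ‖Φ(ρ)‖₂ : ρ positive semidefinite, Tr ρ = 1 }. -/
noncomputable def nu2 {m m' : Type*} [Fintype m] [Fintype m']
    (Φ : Matrix m m ℂ →ₗ[ℂ] Matrix m' m' ℂ) : ℝ :=
  sSup {r | ∃ ρ : Matrix m m ℂ, ρ.PosSemidef ∧ ρ.trace = 1 ∧ r = frob (Φ ρ)}

/-- ν_p(Φ) = sup { ‖Φ(ρ)‖_p : ρ positive semidefinite, Tr ρ = 1 }. -/
noncomputable def nup (p : ℝ) {m m' : Type*} [Fintype m] [Fintype m'] [DecidableEq m']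
    (Φ : Matrix m m ℂ →ₗ[ℂ] Matrix m' m' ℂ) : ℝ :=
  sSup {r | ∃ ρ : Matrix m m ℂ, ρ.PosSemidef ∧ ρ.trace = 1 ∧ r = schatten p (Φ ρ)}

/-- The Pauli matrices σ₁, σ₂, σ₃ (indexed by `Fin 3`). -/
noncomputable def pauli : Fin 3 → Matrix (Fin 2) (Fin 2) ℂ :=
  ![!![0, 1; 1, 0], !![0, -Complex.I; Complex.I, 0], !![1, 0; 0, -1]]

/-!
For x > 0, homogeneity gives g(x) = φ(a/x)^{2/m} with φ(t) = |1 + t|^m + |1 - t|^m. Since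
m ≥ 1, φ is convex, and it is even; a convex even function is nondecreasing on [0, ∞), because
s ∈ [0, t] lies on the segment [-t, t], where φ is bounded by max (φ (-t)) (φ t) = φ t. As a/x
decreases in x, g is nonincreasing.
-/

open Set

theorem convexOn_abs_rpow {p : ℝ} (hp : 1 ≤ p) : ConvexOn ℝ univ fun x : ℝ => |x| ^ p :=
  ⟨convex_univ, fun x _ y _ a b ha hb hab => calc
    |a • x + b • y| ^ p ≤ (a * |x| + b * |y|) ^ p := by
      gcongr
      simpa [abs_of_nonneg ha, abs_of_nonneg hb] using abs_add_le (a * x) (b * y)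
    _ ≤ a • |x| ^ p + b • |y| ^ p :=
      (convexOn_rpow hp).2 (abs_nonneg x) (abs_nonneg y) ha hb hab⟩

theorem ConvexOn.add_comp_reflect {f : ℝ → ℝ} (hf : ConvexOn ℝ univ f) (c : ℝ) :
    ConvexOn ℝ univ fun t => f (c + t) + f (c - t) := by
  have hplus := hf.translate_right c
  have hminus := hplus.comp_linearMap (-LinearMap.id)
  simp only [preimage_univ] at hplus hminus
  exact (hplus.add hminus).congr fun t _ => by simp [sub_eq_add_neg]

theorem monotoneOn_Ici_of_convexOn_of_even {f : ℝ → ℝ} (hf : ConvexOn ℝ univ f)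
    (heven : ∀ x, f (-x) = f x) : MonotoneOn f (Ici 0) := by
  intro s hs t _ hst
  have hseg : s ∈ segment ℝ (-t) t := by
    rw [segment_eq_Icc (by linarith [mem_Ici.1 hs])]
    exact ⟨by linarith [mem_Ici.1 hs], hst⟩
  simpa only [heven, max_self] using hf.le_on_segment trivial trivial hseg

theorem abs_add_rpow_add_abs_sub_rpow_rpow_div_sq {x : ℝ} (hx : 0 < x) (a : ℝ) {m : ℝ} (hm : m ≠ 0) :
    (|x + a| ^ m + |x - a| ^ m) ^ (2 / m) / x ^ 2
      = (|1 + a / x| ^ m + |1 - a / x| ^ m) ^ (2 / m) := by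
  have hplus : x + a = x * (1 + a / x) := by field_simp
  have hminus : x - a = x * (1 - a / x) := by field_simp
  rw [hplus, hminus, abs_mul, abs_mul, abs_of_pos hx, Real.mul_rpow hx.le (abs_nonneg _),
    Real.mul_rpow hx.le (abs_nonneg _), ← mul_add, Real.mul_rpow (by positivity) (by positivity),
    ← Real.rpow_mul hx.le, mul_div_cancel₀ _ hm, Real.rpow_two,
    mul_div_cancel_left₀ _ (by positivity)]

theorem monotoneOn_abs_one_add_rpow_add_abs_one_sub_rpow {m : ℝ} (hm : 1 ≤ m) :
    MonotoneOn (fun t : ℝ => |1 + t| ^ m + |1 - t| ^ m) (Ici 0) :=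
  monotoneOn_Ici_of_convexOn_of_even ((convexOn_abs_rpow hm).add_comp_reflect 1) fun t => by
    rw [sub_neg_eq_add, ← sub_eq_add_neg, add_comm]

/-- For a ≥ 0 and m ≥ 1, the function g(x) = (|x+a|^m + |x−a|^m)^{2/m} / x² is
nonincreasing on (0, ∞). -/
theorem stmt17 (a m : ℝ) (ha : 0 ≤ a) (hm : 1 ≤ m) :
    AntitoneOn (fun x : ℝ => (|x + a| ^ m + |x - a| ^ m) ^ (2 / m) / x ^ 2)
      (Set.Ioi 0) := by
  intro x hx y hy hxy
  have hm₀ : 0 < m := by linarith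
  simp only [abs_add_rpow_add_abs_sub_rpow_rpow_div_sq hx a hm₀.ne',
    abs_add_rpow_add_abs_sub_rpow_rpow_div_sq hy a hm₀.ne']
  have hratio : a / y ≤ a / x := div_le_div_of_nonneg_left ha hx hxy
  exact Real.rpow_le_rpow (by positivity)
    (monotoneOn_abs_one_add_rpow_add_abs_one_sub_rpow hm (div_nonneg ha hy.le)
      (div_nonneg ha hx.le) hratio) (by positivity)
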